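/- Let 𝔽_q be a finite field, χ : 𝔽_q → ℂ a nontrivial additive character, d ≥ 2, and P ∈ 𝔽_q[x₁,…,x_d] a nonconstant polynomial of degree k ≥ 1. For t ∈ 𝔽_q let H_t = {x ∈ 𝔽_q^d : P(x) = t}. Suppose that for some A > 0 one has |Σ_{x∈H_t} χ(m·x)| ≤ A·q^{(d−1)/2} for every t ∈ 𝔽_q and every m ∈ 𝔽_q^d ∖ {0}. Then for all nonempty sets E, F ⊆ 𝔽_q^d, the generalized distance set satisfies |Δ_P(E,F)| ≥ (1/2) · min( q/k , q^{−(d−1)/2} √(|E||F|) / A ); in particular |Δ_P(E,F)| ≳ min(q, q^{−(d−1)/2} √(|E||F|)). -/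

import Mathlib

/-!
Write `ν(t) = #{(x, y) ∈ E × G | P(x - y) = t}` and `Ŝ(m) = ∑_{x ∈ S} χ(m ⬝ x)`. Orthogonality of
characters gives `q^d ν(t) = ∑_m Ê(m) conj Ĝ(m) conj Ĥ_t(m)` for the level set `H_t = {P = t}`.
The term `m = 0` is `|E||G||H_t| ≤ |E||G| k q^(d-1)` by Schwartz–Zippel; every other term is at
most `A q^((d-1)/2) |Ê(m)||Ĝ(m)|`, and `∑_m |Ê(m)||Ĝ(m)| ≤ q^d √(|E||G|)` by Cauchy–Schwarz and
Parseval. Summing `ν(t)` over the distance set `Δ` gives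
`|E||G| ≤ |Δ| (|E||G| k / q + A q^((d-1)/2) √(|E||G|))`, and one of the two summands is at least
half of the bracket.
-/

open Finset MvPolynomial

lemma AddChar.map_sum_eq_prod {A M ι : Type*} [AddCommMonoid A] [CommMonoid M] (ψ : AddChar A M)
    (s : Finset ι) (f : ι → A) : ψ (∑ i ∈ s, f i) = ∏ i ∈ s, ψ (f i) := by
  induction s using Finset.cons_induction with
  | empty => simp
  | cons i s hi ih => rw [sum_cons, prod_cons, AddChar.map_add_eq_mul, ih]

lemma card_filter_eval_eq_div_le {F : Type*} [Field F] [Fintype F] [DecidableEq F] {n : ℕ}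
    {P : MvPolynomial (Fin n) F} (hP : 0 < P.totalDegree) (t : F) :
    (#{x | eval x P = t} : ℝ) / (Fintype.card F : ℝ) ^ n ≤ P.totalDegree / Fintype.card F := by
  have hne : P - C t ≠ 0 := by
    rw [sub_ne_zero]
    rintro rfl
    simp at hP
  have hdeg : (P - C t).totalDegree ≤ P.totalDegree := by
    simpa using totalDegree_sub_C_le P t
  have hSZ := NNRat.cast_le (K := ℝ) |>.2 (schwartz_zippel_totalDegree hne univ)
  simp only [Fintype.piFinset_univ, map_sub, eval_C, sub_eq_zero, card_univ] at hSZ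
  push_cast at hSZ
  exact hSZ.trans (by gcongr)

lemma half_min_le_of_sq_le {s a b D : ℝ} (hs : 0 < s) (ha : 0 < a) (hb : 0 < b)
    (h : s ^ 2 ≤ D * (s ^ 2 * a + b * s)) : min a⁻¹ (s / b) / 2 ≤ D := by
  set μ := min a⁻¹ (s / b)
  have hμ : 0 < μ := lt_min (by positivity) (by positivity)
  have hμa : μ * a ≤ 1 := by
    calc μ * a ≤ a⁻¹ * a := by gcongr; exact min_le_left _ _
      _ = 1 := inv_mul_cancel₀ ha.ne'
  have hμb : μ * b ≤ s := (le_div_iff₀ hb).1 (min_le_right _ _)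
  have hD : 0 ≤ D := (pos_of_mul_pos_left (h.trans_lt' (by positivity)) (by positivity)).le
  have hμs : μ * s ^ 2 ≤ 2 * D * s ^ 2 :=
    calc μ * s ^ 2 ≤ μ * (D * (s ^ 2 * a + b * s)) := by gcongr
      _ = D * s ^ 2 * (μ * a) + D * s * (μ * b) := by ring
      _ ≤ D * s ^ 2 * 1 + D * s * s := by gcongr
      _ = 2 * D * s ^ 2 := by ring
  linarith [le_of_mul_le_mul_right hμs (by positivity)]

section CharSum

variable {F ι : Type*} [Field F] [Fintype ι] {χ : AddChar F ℂ}

lemma sum_addChar_dotProduct [Fintype F] [DecidableEq F] [DecidableEq ι] (hχ : χ ≠ 1)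
    (z : ι → F) :
    ∑ m : ι → F, χ (m ⬝ᵥ z) = if z = 0 then (Fintype.card F : ℂ) ^ Fintype.card ι else 0 := by
  have hsum (c : F) : ∑ a : F, χ (a * c) = if c = 0 then (Fintype.card F : ℂ) else 0 := by
    rw [AddChar.sum_mulShift c (AddChar.IsPrimitive.of_ne_one hχ)]
    split_ifs <;> simp
  simp_rw [dotProduct, AddChar.map_sum_eq_prod]
  rw [← Fintype.prod_sum (fun i a => χ (a * z i))]
  simp_rw [hsum, prod_ite_zero]
  simp [funext_iff]

variable (χ) in
def charSum (S : Finset (ι → F)) (m : ι → F) : ℂ := ∑ x ∈ S, χ (m ⬝ᵥ x)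

@[simp]
lemma charSum_zero (S : Finset (ι → F)) : charSum χ S 0 = #S := by
  simp [charSum]

lemma charSum_mul_conj_mul_conj [Fintype F] (S T U : Finset (ι → F)) (m : ι → F) :
    charSum χ S m * starRingEnd ℂ (charSum χ T m) * starRingEnd ℂ (charSum χ U m) =
      ∑ x ∈ S, ∑ y ∈ T, ∑ u ∈ U, χ (m ⬝ᵥ (x - y - u)) := by
  simp_rw [charSum, map_sum, ← AddChar.map_neg_eq_conj, sum_mul_sum, sum_mul,
    ← AddChar.map_add_eq_mul, dotProduct_sub, sub_eq_add_neg]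
  exact sum_congr rfl fun x _ => sum_comm

lemma sum_charSum_mul_conj_mul_conj [Fintype F] [DecidableEq F] [DecidableEq ι] (hχ : χ ≠ 1)
    (S T U : Finset (ι → F)) :
    ∑ m, charSum χ S m * starRingEnd ℂ (charSum χ T m) * starRingEnd ℂ (charSum χ U m) =
      (Fintype.card F : ℂ) ^ Fintype.card ι * #{p ∈ S ×ˢ T | p.1 - p.2 ∈ U} := by
  simp_rw [charSum_mul_conj_mul_conj]
  rw [sum_comm]
  simp_rw [sum_comm (s := univ) (t := T), sum_comm (s := univ) (t := U)]
  simp_rw [sum_addChar_dotProduct hχ, sub_eq_zero, sum_ite_eq, ← sum_product' (f := fun x y =>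
    if x - y ∈ U then (Fintype.card F : ℂ) ^ Fintype.card ι else 0), ← sum_filter, sum_const,
    nsmul_eq_mul, mul_comm]

lemma sum_norm_charSum_sq [Fintype F] [DecidableEq F] [DecidableEq ι] (hχ : χ ≠ 1)
    (S : Finset (ι → F)) :
    ∑ m, ‖charSum χ S m‖ ^ 2 = (Fintype.card F : ℝ) ^ Fintype.card ι * #S := by
  have h := sum_charSum_mul_conj_mul_conj hχ S S {0}
  have hdiag : {p ∈ S ×ˢ S | p.1 - p.2 ∈ ({0} : Finset (ι → F))} = S.diag := by
    ext p
    simp only [mem_filter, mem_product, mem_singleton, sub_eq_zero, mem_diag]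
    exact ⟨fun h => ⟨h.1.1, h.2⟩, fun h => ⟨⟨h.1, h.2 ▸ h.1⟩, h.2⟩⟩
  simp only [charSum, sum_singleton, dotProduct_zero, AddChar.map_zero_eq_one, map_one, mul_one,
    Complex.mul_conj', hdiag, diag_card] at h
  exact_mod_cast h

lemma sum_norm_charSum_mul_le [Fintype F] [DecidableEq F] [DecidableEq ι] (hχ : χ ≠ 1)
    (S T : Finset (ι → F)) :
    ∑ m, ‖charSum χ S m‖ * ‖charSum χ T m‖ ≤
      (Fintype.card F : ℝ) ^ Fintype.card ι * √(#S * #T) := by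
  calc ∑ m, ‖charSum χ S m‖ * ‖charSum χ T m‖
      ≤ √(∑ m, ‖charSum χ S m‖ ^ 2) * √(∑ m, ‖charSum χ T m‖ ^ 2) :=
        Real.sum_mul_le_sqrt_mul_sqrt _ _ _
    _ = (Fintype.card F : ℝ) ^ Fintype.card ι * √(#S * #T) := by
        rw [sum_norm_charSum_sq hχ, sum_norm_charSum_sq hχ, ← Real.sqrt_mul (by positivity),
          mul_mul_mul_comm, Real.sqrt_mul (by positivity), Real.sqrt_mul_self (by positivity)]

lemma card_filter_sub_mem_le [Fintype F] [DecidableEq F] [DecidableEq ι] (hχ : χ ≠ 1)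
    {U : Finset (ι → F)} {B : ℝ} (hB : 0 ≤ B) (hU : ∀ m ≠ 0, ‖charSum χ U m‖ ≤ B)
    (S T : Finset (ι → F)) :
    (#{p ∈ S ×ˢ T | p.1 - p.2 ∈ U} : ℝ) ≤
      #S * #T * (#U / (Fintype.card F : ℝ) ^ Fintype.card ι) + B * √(#S * #T) := by
  set N : ℝ := (Fintype.card F : ℝ) ^ Fintype.card ι
  set f : (ι → F) → ℂ := fun m =>
    charSum χ S m * starRingEnd ℂ (charSum χ T m) * starRingEnd ℂ (charSum χ U m)
  have hN : 0 < N := by positivity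
  have hf (m : ι → F) : ‖f m‖ = ‖charSum χ S m‖ * ‖charSum χ T m‖ * ‖charSum χ U m‖ := by
    simp [f]
  suffices N * #{p ∈ S ×ˢ T | p.1 - p.2 ∈ U} ≤ #S * #T * #U + B * (N * √(#S * #T)) by
    have hexpand : N * (#S * #T * (#U / N) + B * √(#S * #T)) =
        #S * #T * #U + B * (N * √(#S * #T)) := by
      field_simp
    rwa [← mul_le_mul_iff_of_pos_left hN, hexpand]
  calc N * #{p ∈ S ×ˢ T | p.1 - p.2 ∈ U} = ‖∑ m, f m‖ := by
        rw [sum_charSum_mul_conj_mul_conj hχ]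
        simp [N]
    _ = ‖f 0 + ∑ m ∈ univ.erase 0, f m‖ := by rw [add_sum_erase _ _ (mem_univ 0)]
    _ ≤ ‖f 0‖ + ∑ m ∈ univ.erase 0, ‖f m‖ :=
        (norm_add_le _ _).trans (by gcongr; exact norm_sum_le _ _)
    _ ≤ #S * #T * #U + ∑ m ∈ univ.erase 0, ‖charSum χ S m‖ * ‖charSum χ T m‖ * B := by
        gcongr with m hm
        · simp [hf]
        · rw [hf]
          gcongr
          exact hU m (ne_of_mem_erase hm)
    _ ≤ #S * #T * #U + (∑ m, ‖charSum χ S m‖ * ‖charSum χ T m‖) * B := by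
        rw [sum_mul]
        gcongr
        exact subset_univ _
    _ ≤ #S * #T * #U + B * (N * √(#S * #T)) := by
        rw [mul_comm _ B]
        gcongr
        exact sum_norm_charSum_mul_le hχ S T

lemma card_filter_eval_sub_eq_le [Fintype F] [DecidableEq F] (hχ : χ ≠ 1) {n : ℕ}
    {P : MvPolynomial (Fin n) F} (hP : 0 < P.totalDegree) {B : ℝ} (hB : 0 ≤ B) {t : F}
    (ht : ∀ m ≠ 0, ‖charSum χ {x | eval x P = t} m‖ ≤ B) (S T : Finset (Fin n → F)) :
    (#{p ∈ S ×ˢ T | eval (p.1 - p.2) P = t} : ℝ) ≤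
      #S * #T * (P.totalDegree / Fintype.card F) + B * √(#S * #T) := by
  have h := card_filter_sub_mem_le hχ hB ht S T
  simp only [mem_filter, mem_univ, true_and, Fintype.card_fin] at h
  exact h.trans (add_le_add_left (mul_le_mul_of_nonneg_left (card_filter_eval_eq_div_le hP t)
    (by positivity)) _)

lemma card_mul_card_le_card_image_eval_sub_mul [Fintype F] [DecidableEq F] (hχ : χ ≠ 1)
    {n : ℕ} {P : MvPolynomial (Fin n) F} (hP : 0 < P.totalDegree) {B : ℝ} (hB : 0 ≤ B)
    (hdecay : ∀ t, ∀ m ≠ 0, ‖charSum χ {x | eval x P = t} m‖ ≤ B) (S T : Finset (Fin n → F)) :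
    (#S * #T : ℝ) ≤ #((S ×ˢ T).image fun p => eval (p.1 - p.2) P) *
      (#S * #T * (P.totalDegree / Fintype.card F) + B * √(#S * #T)) := by
  calc (#S * #T : ℝ) = ∑ t ∈ (S ×ˢ T).image (fun p => eval (p.1 - p.2) P),
        (#{p ∈ S ×ˢ T | eval (p.1 - p.2) P = t} : ℝ) := by
        rw [← Nat.cast_mul, ← card_product, card_eq_sum_card_image (fun p => eval (p.1 - p.2) P),
          Nat.cast_sum]
    _ ≤ _ := sum_le_card_nsmul _ _ _ fun t _ =>
        card_filter_eval_sub_eq_le hχ hP hB (hdecay t) S T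
    _ = _ := nsmul_eq_mul _ _

end CharSum

theorem stmt_11_general {F : Type} [Field F] [Fintype F] [DecidableEq F]
    (χ : AddChar F ℂ) (hχ : χ ≠ 1) (d : ℕ)
    (k : ℕ) (hk : 1 ≤ k)
    (P : MvPolynomial (Fin d) F) (hdeg : P.totalDegree = k)
    (A : ℝ) (hA : 0 < A)
    (hdecay : ∀ t : F, ∀ m : Fin d → F, m ≠ 0 →
      ‖(∑ x ∈ Finset.univ.filter
            (fun x : Fin d → F => MvPolynomial.eval x P = t), χ (∑ i, m i * x i))‖
        ≤ A * (Fintype.card F : ℝ) ^ (((d : ℝ) - 1) / 2))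
    (E G : Finset (Fin d → F)) (hE : E.Nonempty) (hG : G.Nonempty) :
    (1 / 2 : ℝ) * min ((Fintype.card F : ℝ) / k)
        ((Fintype.card F : ℝ) ^ (-((d : ℝ) - 1) / 2) * Real.sqrt ((E.card : ℝ) * G.card) / A)
      ≤ (((E ×ˢ G).image (fun p => MvPolynomial.eval (p.1 - p.2) P)).card : ℝ) := by
  set q : ℝ := (Fintype.card F : ℝ)
  set s := √((#E : ℝ) * #G)
  have hq : 0 < q := by positivity
  have hs : 0 < s := Real.sqrt_pos.2 (by have := hE.card_pos; have := hG.card_pos; positivity)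
  have hcount :=
    card_mul_card_le_card_image_eval_sub_mul hχ (hdeg ▸ hk) (by positivity) hdecay E G
  have hs2 : s ^ 2 = #E * #G := Real.sq_sqrt (by positivity)
  rw [hdeg, ← hs2, Real.sqrt_sq hs.le] at hcount
  have key := half_min_le_of_sq_le hs (by positivity : (0 : ℝ) < k / q)
    (by positivity : 0 < A * q ^ (((d : ℝ) - 1) / 2)) hcount
  have hrpow : q ^ (-((d : ℝ) - 1) / 2) * s / A = s / (A * q ^ (((d : ℝ) - 1) / 2)) := by
    rw [neg_div, Real.rpow_neg hq.le]
    field_simp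
  rwa [one_div_mul_eq_div, hrpow, ← inv_div (k : ℝ) q]

/-- Let `P ∈ 𝔽_q[x₁,…,x_d]`, `d ≥ 2`, be a nonconstant polynomial of degree
`k ≥ 1`, and `H_t = {x : P(x) = t}`.  If for some `A > 0` one has
`|Σ_{x∈H_t} χ(m·x)| ≤ A·q^{(d−1)/2}` for every `t` and every `m ≠ 0`, then for all nonempty
`E, F ⊆ 𝔽_q^d` the generalized distance set `Δ_P(E,F) = {P(x−y) : x ∈ E, y ∈ F}` satisfies
`|Δ_P(E,F)| ≥ (1/2)·min( q/k , q^{−(d−1)/2}·√(|E||F|)/A )`. -/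
theorem stmt_11 {F : Type} [Field F] [Fintype F] [DecidableEq F]
    (χ : AddChar F ℂ) (hχ : χ ≠ 1) (d : ℕ) (hd : 2 ≤ d)
    (k : ℕ) (hk : 1 ≤ k)
    (P : MvPolynomial (Fin d) F) (hdeg : P.totalDegree = k)
    (A : ℝ) (hA : 0 < A)
    (hdecay : ∀ t : F, ∀ m : Fin d → F, m ≠ 0 →
      ‖(∑ x ∈ Finset.univ.filter
            (fun x : Fin d → F => MvPolynomial.eval x P = t), χ (∑ i, m i * x i))‖
        ≤ A * (Fintype.card F : ℝ) ^ (((d : ℝ) - 1) / 2))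
    (E G : Finset (Fin d → F)) (hE : E.Nonempty) (hG : G.Nonempty) :
    (1 / 2 : ℝ) * min ((Fintype.card F : ℝ) / k)
        ((Fintype.card F : ℝ) ^ (-((d : ℝ) - 1) / 2) * Real.sqrt ((E.card : ℝ) * G.card) / A)
      ≤ (((E ×ˢ G).image (fun p => MvPolynomial.eval (p.1 - p.2) P)).card : ℝ) :=
  stmt_11_general χ hχ d k hk P hdeg A hA hdecay E G hE hG
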